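/- Let N ≥ 2 and ζ₁ < ζ₂ < ⋯ < ζ_{N+1} be real numbers; for j = 1,…,N set Ω_j = {x ∈ ℝ² : ζ_j < x₂ < ζ_{j+1}}. Let G : ℝ² × ℝ² → ℂ be a kernel, let f : ℝ² → ℂ be supported in {x : ζ₁ < x₂ < ζ_{N+1}}, and set f_j = f·1_{Ω_j}. Let f̄_j⁻ : ℝ² → ℂ (j = 2,…,N) satisfy: f̄_N⁻ = f_N; f̄_j⁻ is supported in the closure of Ω_j; and for every j = 3,…,N and every x with x₂ < ζ_{j−1}, ∫_{Ω_j} f̄_j⁻(y)G(x,y)dy = ∫_{Ω_{j−1}} (f̄_{j−1}⁻(y) − f_{j−1}(y))G(x,y)dy. Assume all functions y ↦ f̄_j⁻(y)G(x,y) and y ↦ f(y)G(x,y) occurring below are Bochner integrable. Then: (i) for every i = 3,…,N and every x ∈ Ω_{i−1}, ∫_{Ω_i} f̄_i⁻(y)G(x,y)dy = ∫_{{y : y₂ > ζ_i}} f(y)G(x,y)dy; and (ii) for every x ∈ Ω_1, ∫_{ℝ²} (f̄_2⁻(y) + f_1(y))·G(x,y)dy = ∫_{ℝ²} f(y)G(x,y)dy.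 -/

import Mathlib

/-!
Split the half-plane `{ζ_i < y₂}` into the layer `Ω_i` and the half-plane `{ζ_{i+1} < y₂}`
(the line `y₂ = ζ_{i+1}` is null). Downwards from `i = N`, where `f̄_N⁻ = f_N` and `f` vanishes
above `ζ_{N+1}`, the transfer hypothesis rewrites the integral of `f̄_i⁻` over `Ω_i` as the
integral of `f̄_{i+1}⁻` over `Ω_{i+1}` plus that of `f_i`, and the splitting telescopes. For
`Ω_1`, the support of `f̄_2⁻` lies in `closure Ω_2`, which differs from `Ω_2` by a null set.
-/

open MeasureTheory

/-- The horizontal layer `Ω_j = {x ∈ ℝ² : ζ_j < x₂ < ζ_{j+1}}`. -/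
def layer (ζ : ℕ → ℝ) (j : ℕ) : Set (ℝ × ℝ) := {x : ℝ × ℝ | ζ j < x.2 ∧ x.2 < ζ (j + 1)}

/-- The piece `f_j = f·1_{Ω_j}` of the source `f`. -/
noncomputable def piece (ζ : ℕ → ℝ) (f : ℝ × ℝ → ℂ) (j : ℕ) : ℝ × ℝ → ℂ :=
  (layer ζ j).indicator f

open Set

lemma measurableSet_layer (ζ : ℕ → ℝ) (j : ℕ) : MeasurableSet (layer ζ j) :=
  measurable_snd measurableSet_Ioo

lemma snd_preimage_Ioi_ae_eq_Ici (c : ℝ) :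
    (Prod.snd ⁻¹' Ioi c : Set (ℝ × ℝ)) =ᵐ[volume] Prod.snd ⁻¹' Ici c :=
  Measure.quasiMeasurePreserving_snd.preimage_ae_eq Ioi_ae_eq_Ici

lemma snd_preimage_Icc_ae_eq_Ioo (a b : ℝ) :
    (Prod.snd ⁻¹' Icc a b : Set (ℝ × ℝ)) =ᵐ[volume] Prod.snd ⁻¹' Ioo a b :=
  Measure.quasiMeasurePreserving_snd.preimage_ae_eq Ioo_ae_eq_Icc.symm

section

variable {E : Type*} [NormedAddCommGroup E] [NormedSpace ℝ E]

lemma setIntegral_upper_eq_layer_add {ζ : ℕ → ℝ} {i : ℕ} (hζi : ζ i < ζ (i + 1))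
    {g : ℝ × ℝ → E} (hg : Integrable g) :
    ∫ y in {y : ℝ × ℝ | ζ i < y.2}, g y
      = (∫ y in layer ζ i, g y) + ∫ y in {y : ℝ × ℝ | ζ (i + 1) < y.2}, g y := by
  have hsplit : {y : ℝ × ℝ | ζ i < y.2} = layer ζ i ∪ Prod.snd ⁻¹' Ici (ζ (i + 1)) := by
    ext y
    simp only [layer, mem_ofPred_eq, mem_union, mem_preimage, mem_Ici]
    constructor
    · intro hy
      exact (lt_or_ge y.2 (ζ (i + 1))).imp (⟨hy, ·⟩) id
    · rintro (hy | hy)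
      exacts [hy.1, hζi.trans_le hy]
  have hdisj : Disjoint (layer ζ i) (Prod.snd ⁻¹' Ici (ζ (i + 1))) :=
    disjoint_left.2 fun _ hy hy' => (not_lt.2 hy') hy.2
  rw [hsplit, setIntegral_union hdisj (measurable_snd measurableSet_Ici) hg.integrableOn
    hg.integrableOn, ← setIntegral_congr_set (snd_preimage_Ioi_ae_eq_Ici (ζ (i + 1)))]
  rfl

lemma integral_eq_setIntegral_layer_of_support_subset {ζ : ℕ → ℝ} {j : ℕ} {g : ℝ × ℝ → E}
    (hg : Function.support g ⊆ closure (layer ζ j)) :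
    ∫ y, g y = ∫ y in layer ζ j, g y := by
  have hclosure : closure (layer ζ j) ⊆ Prod.snd ⁻¹' Icc (ζ j) (ζ (j + 1)) :=
    closure_minimal (fun y hy => Ioo_subset_Icc_self hy) (isClosed_Icc.preimage continuous_snd)
  rw [← setIntegral_eq_integral_of_forall_compl_eq_zero fun y hy =>
      Function.notMem_support.1 fun hy' => hy (hclosure (hg hy')),
    setIntegral_congr_set (snd_preimage_Icc_ae_eq_Ioo _ _)]
  rfl

end

lemma piece_mul (ζ : ℕ → ℝ) (f g : ℝ × ℝ → ℂ) (j : ℕ) :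
    (fun y => piece ζ f j y * g y) = (layer ζ j).indicator (fun y => f y * g y) :=
  funext fun _ => (indicator_mul_left _ _ _).symm

lemma setIntegral_layer_piece_mul (ζ : ℕ → ℝ) (f g : ℝ × ℝ → ℂ) (j : ℕ) :
    ∫ y in layer ζ j, piece ζ f j y * g y = ∫ y in layer ζ j, f y * g y :=
  setIntegral_congr_fun (measurableSet_layer ζ j) fun y hy => by
    simp only [piece, indicator_of_mem hy]

theorem setIntegral_layer_transferred_eq_upper {N : ℕ} {ζ : ℕ → ℝ}
    (hζ : ∀ j, 1 ≤ j → j ≤ N → ζ j < ζ (j + 1)) {G : ℝ × ℝ → ℝ × ℝ → ℂ} {f : ℝ × ℝ → ℂ}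
    (hf_top : ∀ y : ℝ × ℝ, ζ (N + 1) ≤ y.2 → f y = 0)
    {fbar : ℕ → ℝ × ℝ → ℂ} (hfbarN : fbar N = piece ζ f N)
    (htransfer : ∀ j, 3 ≤ j → j ≤ N → ∀ x : ℝ × ℝ, x.2 < ζ (j - 1) →
      ∫ y in layer ζ j, fbar j y * G x y
        = ∫ y in layer ζ (j - 1), (fbar (j - 1) y - piece ζ f (j - 1) y) * G x y)
    (hint_fbar : ∀ j, 2 ≤ j → j ≤ N → ∀ x : ℝ × ℝ, Integrable (fun y => fbar j y * G x y))
    (hint_f : ∀ x : ℝ × ℝ, Integrable (fun y => f y * G x y))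
    (i : ℕ) (hi : 2 ≤ i) (hiN : i ≤ N) (x : ℝ × ℝ) (hx : x.2 < ζ i) :
    ∫ y in layer ζ i, fbar i y * G x y = ∫ y in {y : ℝ × ℝ | ζ i < y.2}, f y * G x y := by
  induction hiN using Nat.decreasingInduction generalizing x with
  | self =>
    rw [hfbarN, setIntegral_layer_piece_mul]
    exact (setIntegral_eq_of_subset_of_forall_sdiff_eq_zero (measurable_snd measurableSet_Ioi)
      (fun y hy => hy.1) fun y hy => by
        rw [hf_top y (not_lt.1 fun h => hy.2 ⟨hy.1, h⟩), zero_mul]).symm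
  | of_succ k hkN ih =>
    have hζk : ζ k < ζ (k + 1) := hζ k (by omega) hkN.le
    have hpiece : IntegrableOn (fun y => piece ζ f k y * G x y) (layer ζ k) := by
      rw [piece_mul]
      exact ((hint_f x).indicator (measurableSet_layer ζ k)).integrableOn
    have htransfer_k := htransfer (k + 1) (by omega) hkN x (by simpa using hx)
    simp only [Nat.add_sub_cancel, sub_mul] at htransfer_k
    calc ∫ y in layer ζ k, fbar k y * G x y
        = (∫ y in layer ζ (k + 1), fbar (k + 1) y * G x y)
          + ∫ y in layer ζ k, piece ζ f k y * G x y := by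
          rw [htransfer_k, integral_sub (hint_fbar k hi hkN.le x).integrableOn hpiece,
            sub_add_cancel]
      _ = (∫ y in {y : ℝ × ℝ | ζ (k + 1) < y.2}, f y * G x y)
          + ∫ y in layer ζ k, f y * G x y := by
          rw [ih (by omega) x (hx.trans hζk), setIntegral_layer_piece_mul]
      _ = ∫ y in {y : ℝ × ℝ | ζ k < y.2}, f y * G x y := by
          rw [setIntegral_upper_eq_layer_add hζk (hint_f x), add_comm]

/-- Theorem 2.2(ii)–(iii) of the paper: after the downward source transfer steps, the `i`-th
subproblem solution equals, in the layer `Ω_{i-1}`, the field radiated by the part of the source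
above `ζ_i`, and the last subproblem solution reproduces the full field in `Ω_1`. -/
theorem stmt_4
    (N : ℕ) (hN : 2 ≤ N)
    (ζ : ℕ → ℝ) (hζ : ∀ j, 1 ≤ j → j ≤ N → ζ j < ζ (j + 1))
    (G : ℝ × ℝ → ℝ × ℝ → ℂ)
    (f : ℝ × ℝ → ℂ)
    (hf_supp : Function.support f ⊆ {x : ℝ × ℝ | ζ 1 < x.2 ∧ x.2 < ζ (N + 1)})
    (fbar : ℕ → ℝ × ℝ → ℂ)
    (hfbarN : fbar N = piece ζ f N)
    (hfbar_supp : ∀ j, 2 ≤ j → j ≤ N →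
      Function.support (fbar j) ⊆ closure (layer ζ j))
    (htransfer : ∀ j, 3 ≤ j → j ≤ N → ∀ x : ℝ × ℝ, x.2 < ζ (j - 1) →
      ∫ y in layer ζ j, fbar j y * G x y
        = ∫ y in layer ζ (j - 1), (fbar (j - 1) y - piece ζ f (j - 1) y) * G x y)
    (hint_fbar : ∀ j, 2 ≤ j → j ≤ N → ∀ x : ℝ × ℝ,
      Integrable (fun y => fbar j y * G x y))
    (hint_f : ∀ x : ℝ × ℝ, Integrable (fun y => f y * G x y)) :
    (∀ i, 3 ≤ i → i ≤ N → ∀ x ∈ layer ζ (i - 1),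
      ∫ y in layer ζ i, fbar i y * G x y
        = ∫ y in {y : ℝ × ℝ | ζ i < y.2}, f y * G x y)
    ∧ (∀ x ∈ layer ζ 1,
      ∫ y : ℝ × ℝ, (fbar 2 y + piece ζ f 1 y) * G x y
        = ∫ y : ℝ × ℝ, f y * G x y) := by
  have hf_top : ∀ y : ℝ × ℝ, ζ (N + 1) ≤ y.2 → f y = 0 := fun y hy =>
    Function.notMem_support.1 fun h => (hf_supp h).2.not_ge hy
  have key := setIntegral_layer_transferred_eq_upper hζ hf_top hfbarN htransfer hint_fbar hint_f
  refine ⟨fun i hi hiN x hx => key i (by omega) hiN x ?_, fun x hx => ?_⟩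
  · simpa [Nat.sub_add_cancel (by omega : 1 ≤ i)] using hx.2
  have hpiece : Integrable (fun y => piece ζ f 1 y * G x y) := by
    rw [piece_mul]
    exact (hint_f x).indicator (measurableSet_layer ζ 1)
  calc ∫ y, (fbar 2 y + piece ζ f 1 y) * G x y
      = (∫ y, fbar 2 y * G x y) + ∫ y, piece ζ f 1 y * G x y := by
        simp only [add_mul]
        exact integral_add (hint_fbar 2 le_rfl hN x) hpiece
    _ = (∫ y in {y : ℝ × ℝ | ζ 2 < y.2}, f y * G x y) + ∫ y in layer ζ 1, f y * G x y := by
        rw [integral_eq_setIntegral_layer_of_support_subset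
            ((Function.support_mul_subset_left _ _).trans (hfbar_supp 2 le_rfl hN)),
          key 2 le_rfl hN x hx.2, piece_mul, integral_indicator (measurableSet_layer ζ 1)]
    _ = ∫ y in {y : ℝ × ℝ | ζ 1 < y.2}, f y * G x y := by
        rw [setIntegral_upper_eq_layer_add (hζ 1 le_rfl (by omega)) (hint_f x), add_comm]
    _ = ∫ y, f y * G x y :=
        setIntegral_eq_integral_of_forall_compl_eq_zero fun y hy =>
          by rw [Function.notMem_support.1 fun h => hy (hf_supp h).1, zero_mul]
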